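/- In (ℝ^d)^n, the diagonals Δ_{Γ_1}, ..., Δ_{Γ_j} corresponding to the blocks of a connected graph Γ on n vertices intersect transversely: the codimension of their intersection equals the sum of their codimensions. -/

import Mathlib

/-- `v` is a cut vertex of `G`: its removal disconnects `G`, i.e. some two vertices
(other than `v`) are connected in `G` but no longer connected after deleting `v`. -/
def SimpleGraph.IsCutVertex {V : Type*} (G : SimpleGraph V) (v : V) : Prop :=
  ∃ (a b : V) (ha : a ≠ v) (hb : b ≠ v),
    G.Reachable a b ∧ ¬ (G.induce {u | u ≠ v}).Reachable ⟨a, ha⟩ ⟨b, hb⟩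

/-- A subgraph is biconnected if it is connected, has at least one edge
(so a single edge is biconnected but a single vertex is not), and has no cut vertex. -/
def SimpleGraph.Subgraph.Biconnected {V : Type*} {G : SimpleGraph V} (H : G.Subgraph) : Prop :=
  H.coe.Connected ∧ H.edgeSet.Nonempty ∧ ∀ v : H.verts, ¬ H.coe.IsCutVertex v

/-- A block of `G` is a maximal biconnected subgraph of `G`. -/
def SimpleGraph.IsBlock {V : Type*} (G : SimpleGraph V) (H : G.Subgraph) : Prop :=
  H.Biconnected ∧ ∀ H' : G.Subgraph, H'.Biconnected → H ≤ H' → H' = H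

/-- For a subset `S` of the vertices, the diagonal `Δ_S ⊆ (ℝ^d)^V` where all coordinates
indexed by elements of `S` agree. -/
def diagSubmodule (d : ℕ) {V : Type*} (S : Set V) :
    Submodule ℝ (V → EuclideanSpace ℝ (Fin d)) where
  carrier := {x | ∀ i ∈ S, ∀ j ∈ S, x i = x j}
  add_mem' := by
    intro a b ha hb i hi j hj
    simp only [Pi.add_apply, ha i hi j hj, hb i hi j hj]
  zero_mem' := fun i _ j _ => rfl
  smul_mem' := by
    intro c x hx i hi j hj
    simp only [Pi.smul_apply, hx i hi j hj]

/-! The intersection of the block diagonals is the thin diagonal, because every edge lies in a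
block and the graph is connected; so everything reduces to `∑ (|H| - 1) = n - 1` over the blocks.
This holds for every connected subgraph `K`, by induction on `|K|`. A cut vertex `v` splits `K`
into two connected pieces meeting only in `v` (`v` with some of the components of `K - v`, and
`v` with the others); a biconnected subgraph cannot be separated by `v`, so it lies in one piece,
the blocks of `K` are those of the two pieces, and `|K| - 1 = (|K₁| - 1) + (|K₂| - 1)`. Without
a cut vertex, `K` is a single vertex (no blocks) or its own only block. -/

namespace SimpleGraph.Subgraph

variable {V : Type*} {G : SimpleGraph V}

def IsBlock (K H : G.Subgraph) : Prop :=
  Maximal (fun H' : G.Subgraph => H'.Biconnected ∧ H' ≤ K) H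

lemma _root_.SimpleGraph.isBlock_iff_maximal {H : G.Subgraph} :
    G.IsBlock H ↔ Maximal Biconnected H := by
  rw [maximal_iff]
  exact and_congr_right fun _ => forall₂_congr fun H' _ => forall_congr' fun h => eq_comm

lemma isBlock_top_iff {H : G.Subgraph} : (⊤ : G.Subgraph).IsBlock H ↔ G.IsBlock H := by
  simp only [IsBlock, le_top, and_true, isBlock_iff_maximal]

lemma le_induce_iff {H K : G.Subgraph} {s : Set V} (hs : s ⊆ K.verts) :
    H ≤ K.induce s ↔ H ≤ K ∧ H.verts ⊆ s := by
  refine ⟨fun h => ⟨h.trans ?_, h.1⟩, fun ⟨h, hsub⟩ => ?_⟩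
  · simpa only [induce_self_verts] using induce_mono_right (G' := K) hs
  · simpa only [induce_self_verts] using induce_mono h hsub

lemma Biconnected.verts_nontrivial {H : G.Subgraph} (hH : H.Biconnected) : H.verts.Nontrivial := by
  obtain ⟨e, he⟩ := hH.2.1
  induction e with
  | h a b => exact ⟨a, H.edge_vert he, b, H.edge_vert he.symm, (H.adj_sub he).ne⟩

lemma biconnected_of_forall_not_isCutVertex {K : G.Subgraph} (hK : K.coe.Connected)
    (hnt : K.verts.Nontrivial) (hcut : ∀ v, ¬ K.coe.IsCutVertex v) : K.Biconnected := by
  have : Nontrivial K.verts := hnt.coe_sort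
  obtain ⟨v⟩ := hK.nonempty
  obtain ⟨u, hvu⟩ := Preconnected.exists_adj_of_nontrivial ⟨hK.preconnected⟩ v
  exact ⟨hK, ⟨s(↑v, u), hvu⟩, hcut⟩

lemma isBlock_iff_eq_self {K H : G.Subgraph} (hK : K.Biconnected) : K.IsBlock H ↔ H = K :=
  maximal_iff_eq ⟨hK, le_rfl⟩ fun _ h => h.2

lemma subgraphOfAdj_biconnected {a b : V} (hab : G.Adj a b) :
    (G.subgraphOfAdj hab).Biconnected := by
  refine ⟨(subgraphOfAdj_connected hab).coe, ⟨s(a, b), by simp⟩, ?_⟩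
  rintro ⟨v, hv⟩ ⟨⟨x, hx⟩, ⟨y, hy⟩, hxv, hyv, -, hnr⟩
  simp only [subgraphOfAdj_verts, Set.mem_insert_iff, Set.mem_singleton_iff] at hv hx hy
  rcases hv with rfl | rfl <;> rcases hx with rfl | rfl <;> rcases hy with rfl | rfl <;>
    first | exact hxv rfl | exact hyv rfl | exact hnr Reachable.rfl

lemma _root_.SimpleGraph.exists_isBlock_ge [Finite V] {H₀ : G.Subgraph}
    (h₀ : H₀.Biconnected) :
    ∃ H, G.IsBlock H ∧ H₀ ≤ H := by
  obtain ⟨H, hle, hH⟩ := Finite.exists_le_maximal h₀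
  exact ⟨H, isBlock_iff_maximal.2 hH, hle⟩

abbrev puncture (K : G.Subgraph) (v : K.verts) : SimpleGraph {u : K.verts | u ≠ v} :=
  K.coe.induce {u | u ≠ v}

def piece (K : G.Subgraph) (v : K.verts) (C : Set (K.puncture v).ConnectedComponent) : Set V :=
  insert ↑v {x | ∃ (hx : x ∈ K.verts) (hxv : ⟨x, hx⟩ ≠ v),
    (K.puncture v).connectedComponentMk ⟨⟨x, hx⟩, hxv⟩ ∈ C}

section Piece

variable {K H : G.Subgraph} {v : K.verts} {C : Set (K.puncture v).ConnectedComponent}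

lemma coe_mem_piece : (v : V) ∈ K.piece v C := Set.mem_insert _ _

lemma piece_subset : K.piece v C ⊆ K.verts := by
  rintro x (rfl | ⟨hx, -, -⟩)
  exacts [v.2, hx]

lemma mem_piece_iff {x : V} (hx : x ∈ K.verts) (hxv : x ≠ v) :
    x ∈ K.piece v C ↔
      (K.puncture v).connectedComponentMk ⟨⟨x, hx⟩, Subtype.coe_ne_coe.1 hxv⟩ ∈ C := by
  refine ⟨?_, fun h => Or.inr ⟨hx, _, h⟩⟩
  rintro (h | ⟨_, _, h⟩)
  exacts [absurd h hxv, h]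

lemma mem_piece_of_adj {x y : V} (hxy : K.Adj x y) (hx : x ∈ K.piece v C) (hxv : x ≠ v) :
    y ∈ K.piece v C := by
  by_cases hyv : y = v
  · exact hyv ▸ coe_mem_piece
  have hadj : (K.puncture v).Adj ⟨⟨x, K.edge_vert hxy⟩, Subtype.coe_ne_coe.1 hxv⟩
      ⟨⟨y, K.edge_vert hxy.symm⟩, Subtype.coe_ne_coe.1 hyv⟩ := hxy
  rw [mem_piece_iff (K.edge_vert hxy) hxv] at hx
  rw [mem_piece_iff (K.edge_vert hxy.symm) hyv, ← ConnectedComponent.sound hadj.reachable]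
  exact hx

lemma reachable_induce_piece (hK : K.coe.Connected) {x : V} (hx : x ∈ K.piece v C) :
    (K.induce (K.piece v C)).coe.Reachable ⟨x, hx⟩ ⟨v, coe_mem_piece⟩ := by
  suffices ∀ y : K.verts, K.coe.Reachable y v → ∀ hy : ↑y ∈ K.piece v C,
      (K.induce (K.piece v C)).coe.Reachable ⟨y, hy⟩ ⟨v, coe_mem_piece⟩ from
    this ⟨x, piece_subset hx⟩ (hK.preconnected _ _) hx
  intro y hy
  rw [reachable_iff_reflTransGen] at hy
  induction hy using Relation.ReflTransGen.head_induction_on with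
  | refl => exact fun _ => Reachable.rfl
  | @head y z hyz _ ih =>
    intro hy
    by_cases hyv : y = v
    · subst hyv
      exact Reachable.rfl
    have hz := mem_piece_of_adj hyz hy (Subtype.coe_ne_coe.2 hyv)
    have hadj : (K.induce (K.piece v C)).coe.Adj ⟨y, hy⟩ ⟨z, hz⟩ := ⟨hy, hz, hyz⟩
    exact hadj.reachable.trans (ih hz)

lemma induce_piece_connected (hK : K.coe.Connected) : (K.induce (K.piece v C)).coe.Connected :=
  (connected_iff _).2 ⟨fun x y => (reachable_induce_piece hK x.2).trans
    (reachable_induce_piece hK y.2).symm, ⟨⟨v, coe_mem_piece⟩⟩⟩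

lemma piece_union_piece_compl : K.piece v C ∪ K.piece v Cᶜ = K.verts := by
  refine subset_antisymm (Set.union_subset piece_subset piece_subset) fun x hx => ?_
  by_cases hxv : x = v
  · exact Or.inl (hxv ▸ coe_mem_piece)
  rw [Set.mem_union, mem_piece_iff hx hxv, mem_piece_iff hx hxv]
  exact em _

lemma piece_inter_piece_compl : K.piece v C ∩ K.piece v Cᶜ = {(v : V)} := by
  refine subset_antisymm (fun x ⟨hx, hx'⟩ => ?_) (by simp [coe_mem_piece])
  by_contra hxv
  rw [mem_piece_iff (piece_subset hx) hxv] at hx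
  rw [mem_piece_iff (piece_subset hx') hxv] at hx'
  exact hx' hx

lemma ncard_piece_add_ncard_piece_compl [Finite V] :
    (K.piece v C).ncard + (K.piece v Cᶜ).ncard = K.verts.ncard + 1 := by
  rw [← Set.ncard_union_add_ncard_inter, piece_union_piece_compl, piece_inter_piece_compl,
    Set.ncard_singleton]

lemma Biconnected.reachable_puncture (hH : H.Biconnected) (hle : H ≤ K) {a b : V}
    (ha : a ∈ H.verts) (hb : b ∈ H.verts) (hav : a ≠ v) (hbv : b ≠ v) :
    (K.puncture v).Reachable ⟨⟨a, hle.1 ha⟩, Subtype.coe_ne_coe.1 hav⟩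
      ⟨⟨b, hle.1 hb⟩, Subtype.coe_ne_coe.1 hbv⟩ := by
  have hab : H.coe.Reachable ⟨a, ha⟩ ⟨b, hb⟩ := hH.1.preconnected _ _
  by_cases hvH : (v : V) ∈ H.verts
  · have hab' : (H.coe.induce {u | u ≠ ⟨v, hvH⟩}).Reachable
        ⟨⟨a, ha⟩, Subtype.coe_ne_coe.1 hav⟩
        ⟨⟨b, hb⟩, Subtype.coe_ne_coe.1 hbv⟩ := by
      by_contra h
      exact hH.2.2 ⟨v, hvH⟩ ⟨_, _, _, _, hab, h⟩
    exact Reachable.map (G' := K.puncture v)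
      { toFun := fun u => ⟨⟨u.1.1, hle.1 u.1.2⟩, fun h => u.2 (Subtype.ext congr($h.1))⟩
        map_rel' := fun h => hle.2 h } hab'
  · exact Reachable.map (G' := K.puncture v)
      { toFun := fun u => ⟨⟨u.1, hle.1 u.2⟩, fun h => hvH (h ▸ u.2)⟩
        map_rel' := fun h => hle.2 h } hab

lemma Biconnected.verts_subset_piece_or (hH : H.Biconnected) (hle : H ≤ K) :
    H.verts ⊆ K.piece v C ∨ H.verts ⊆ K.piece v Cᶜ := by
  obtain ⟨a, ha, hav⟩ := hH.verts_nontrivial.exists_ne (v : V)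
  have hsub : ∀ C', a ∈ K.piece v C' → H.verts ⊆ K.piece v C' := by
    intro C' haC b hb
    by_cases hbv : b = v
    · exact hbv ▸ coe_mem_piece
    rw [mem_piece_iff (hle.1 ha) hav] at haC
    rw [mem_piece_iff (hle.1 hb) hbv,
      ← ConnectedComponent.sound (hH.reachable_puncture hle ha hb hav hbv)]
    exact haC
  by_cases haC : a ∈ K.piece v C
  · exact Or.inl (hsub C haC)
  · refine Or.inr (hsub Cᶜ ?_)
    rwa [mem_piece_iff (hle.1 ha) hav, Set.mem_compl_iff, ← mem_piece_iff (hle.1 ha) hav]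

lemma Biconnected.verts_subset_piece_compl_iff (hH : H.Biconnected) (hle : H ≤ K) :
    H.verts ⊆ K.piece v Cᶜ ↔ ¬ H.verts ⊆ K.piece v C := by
  refine ⟨fun h h' => ?_, (hH.verts_subset_piece_or hle).resolve_left⟩
  have := Set.subset_inter h' h
  rw [piece_inter_piece_compl] at this
  exact hH.verts_nontrivial.not_subset_singleton this

lemma isBlock_induce_piece_iff :
    (K.induce (K.piece v C)).IsBlock H ↔ K.IsBlock H ∧ H.verts ⊆ K.piece v C := by
  have hP : ∀ H' : G.Subgraph, H'.Biconnected ∧ H' ≤ K.induce (K.piece v C) ↔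
      (H'.Biconnected ∧ H' ≤ K) ∧ H'.verts ⊆ K.piece v C := fun H' => by
    rw [le_induce_iff piece_subset, and_assoc]
  simp only [IsBlock, hP]
  refine ⟨fun h => ⟨⟨h.prop.1, fun H' hH' hHH' => ?_⟩, h.prop.2⟩,
    fun h => h.1.mono (fun _ h' => h'.1) ⟨h.1.prop, h.2⟩⟩
  refine h.le_of_ge ⟨hH', (hH'.1.verts_subset_piece_or hH'.2).resolve_right fun hc => ?_⟩ hHH'
  -- `H ≤ H'` would put `H` inside both pieces, whose intersection is `{v}`
  exact (h.prop.1.1.verts_subset_piece_compl_iff h.prop.1.2).1 (hHH'.1.trans hc) h.prop.2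

end Piece

lemma exists_ncard_piece_lt_of_isCutVertex [Finite V] {K : G.Subgraph} {v : K.verts}
    (hv : K.coe.IsCutVertex v) : ∃ C : Set (K.puncture v).ConnectedComponent,
      (K.piece v C).ncard < K.verts.ncard ∧ (K.piece v Cᶜ).ncard < K.verts.ncard := by
  obtain ⟨a, b, hav, hbv, -, hab⟩ := hv
  have hmk : (K.puncture v).connectedComponentMk ⟨a, hav⟩ ≠
      (K.puncture v).connectedComponentMk ⟨b, hbv⟩ := fun h => hab (ConnectedComponent.exact h)
  refine ⟨{(K.puncture v).connectedComponentMk ⟨a, hav⟩}, Set.ncard_lt_ncard ?_,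
    Set.ncard_lt_ncard ?_⟩
  · refine ssubset_of_subset_not_subset piece_subset fun h => ?_
    have := h b.2
    rw [mem_piece_iff b.2 (Subtype.coe_ne_coe.2 hbv)] at this
    exact hmk this.symm
  · refine ssubset_of_subset_not_subset piece_subset fun h => ?_
    have := h a.2
    rw [mem_piece_iff a.2 (Subtype.coe_ne_coe.2 hav)] at this
    exact this rfl

theorem sum_ncard_sub_one_of_isBlock [Finite V] {K : G.Subgraph} (hK : K.coe.Connected)
    (B : Finset G.Subgraph) (hB : ∀ H, H ∈ B ↔ K.IsBlock H) :
    ∑ H ∈ B, (H.verts.ncard - 1) = K.verts.ncard - 1 := by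
  induction hn : K.verts.ncard using Nat.strong_induction_on generalizing K B with
  | _ n ih =>
  subst hn
  by_cases hcut : ∃ v, K.coe.IsCutVertex v
  · obtain ⟨v, hv⟩ := hcut
    obtain ⟨C, hC, hCc⟩ := exists_ncard_piece_lt_of_isCutVertex hv
    classical
    rw [← Finset.sum_filter_add_sum_filter_not B (fun H => H.verts ⊆ K.piece v C),
      ih _ hC (induce_piece_connected hK) _ (fun H => by
        rw [Finset.mem_filter, hB, isBlock_induce_piece_iff]) rfl,
      ih _ hCc (induce_piece_connected hK) _ (fun H => by
        rw [Finset.mem_filter, hB, isBlock_induce_piece_iff]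
        exact and_congr_right fun h => (h.prop.1.verts_subset_piece_compl_iff h.prop.2).symm) rfl]
    have := ncard_piece_add_ncard_piece_compl (C := C)
    have h₁ := (Set.ncard_pos).2 ⟨_, coe_mem_piece (C := C)⟩
    have h₂ := (Set.ncard_pos).2 ⟨_, coe_mem_piece (C := Cᶜ)⟩
    omega
  rw [not_exists] at hcut
  by_cases hnt : K.verts.Nontrivial
  · have hB' : B = {K} := by
      ext H
      rw [hB, Finset.mem_singleton,
        isBlock_iff_eq_self (biconnected_of_forall_not_isCutVertex hK hnt hcut)]
    rw [hB', Finset.sum_singleton]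
  · have hB' : B = ∅ := Finset.eq_empty_of_forall_notMem fun H hH =>
      hnt (((hB H).1 hH).prop.1.verts_nontrivial.mono ((hB H).1 hH).prop.2.1)
    rw [hB', Finset.sum_empty, Nat.sub_eq_zero_of_le
      (Set.ncard_le_one_iff_subsingleton.2 (Set.not_nontrivial_iff.1 hnt))]

end SimpleGraph.Subgraph

theorem SimpleGraph.Connected.sum_ncard_sub_one_of_isBlock {V : Type*} [Fintype V]
    {G : SimpleGraph V} (hG : G.Connected) (B : Finset G.Subgraph)
    (hB : ∀ H, H ∈ B ↔ G.IsBlock H) :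
    ∑ H ∈ B, (H.verts.ncard - 1) = Fintype.card V - 1 := by
  rw [Subgraph.sum_ncard_sub_one_of_isBlock (Subgraph.topIso.connected_iff.2 hG) B
    fun H => by rw [hB, ← Subgraph.isBlock_top_iff], Subgraph.verts_top, Set.ncard_univ,
    Nat.card_eq_fintype_card]

section Diagonal

open SimpleGraph

variable {V : Type*} (d : ℕ)

lemma diagSubmodule_anti {S T : Set V} (hST : S ⊆ T) : diagSubmodule d T ≤ diagSubmodule d S :=
  fun _ hx i hi j hj => hx i (hST hi) j (hST hj)

lemma diagSubmodule_univ_eq_range [Nonempty V] :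
    diagSubmodule d (Set.univ : Set V) =
      LinearMap.range (LinearMap.const (R := ℝ) (ι := V)) := by
  ext x
  refine ⟨fun hx => ?_, ?_⟩
  · obtain ⟨i₀⟩ := ‹Nonempty V›
    exact ⟨x i₀, funext fun i => hx i₀ trivial i trivial⟩
  · rintro ⟨y, rfl⟩ i - j -
    rfl

lemma finrank_diagSubmodule_univ [Nonempty V] :
    Module.finrank ℝ (diagSubmodule d (Set.univ : Set V)) = d := by
  rw [diagSubmodule_univ_eq_range, LinearMap.finrank_range_of_inj (Function.const_injective),
    finrank_euclideanSpace_fin]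

lemma iInf_diagSubmodule_blocks_eq_univ [Finite V] {G : SimpleGraph V} (hG : G.Connected)
    (B : Finset G.Subgraph) (hB : ∀ H, H ∈ B ↔ G.IsBlock H) :
    ⨅ H ∈ B, diagSubmodule d H.verts = diagSubmodule d (Set.univ : Set V) := by
  refine le_antisymm (fun x hx => ?_)
    (le_iInf₂ fun H _ => diagSubmodule_anti d (Set.subset_univ _))
  simp only [Submodule.mem_iInf] at hx
  have hadj : ∀ a b, G.Adj a b → x a = x b := fun a b hab => by
    obtain ⟨H, hH, hle⟩ := exists_isBlock_ge (Subgraph.subgraphOfAdj_biconnected hab)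
    exact hx H ((hB H).2 hH) a (hle.1 (by simp)) b (hle.1 (by simp))
  rintro i - j -
  obtain ⟨w⟩ := hG.preconnected i j
  induction w with
  | nil => rfl
  | cons h _ ih => exact (hadj _ _ h).trans ih

end Diagonal

open Finset in
theorem block_diagonals_transverse_general {V : Type*} [Fintype V] (G : SimpleGraph V) (d : ℕ)
    (hG : G.Connected)
    (B : Finset G.Subgraph) (hB : ∀ H : G.Subgraph, H ∈ B ↔ G.IsBlock H) :
    Fintype.card V * d - Module.finrank ℝ ↥(⨅ H ∈ B, diagSubmodule d H.verts) =
      ∑ H ∈ B, (H.verts.ncard - 1) * d := by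
  have := hG.nonempty
  rw [iInf_diagSubmodule_blocks_eq_univ d hG B hB, finrank_diagSubmodule_univ, ← Finset.sum_mul,
    hG.sum_ncard_sub_one_of_isBlock B hB, Nat.sub_one_mul]

open Finset in
/-- The diagonals corresponding to the blocks of a connected graph `Γ` on `n` vertices
intersect transversely in `(ℝ^d)^n`: the codimension of their intersection equals the sum
of their codimensions `(nᵢ − 1)·d`. -/
theorem block_diagonals_transverse {V : Type*} [Fintype V] (G : SimpleGraph V) (d : ℕ)
    (hG : G.Connected) (hV : Nontrivial V)
    (B : Finset G.Subgraph) (hB : ∀ H : G.Subgraph, H ∈ B ↔ G.IsBlock H) :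
    Fintype.card V * d - Module.finrank ℝ ↥(⨅ H ∈ B, diagSubmodule d H.verts) =
      ∑ H ∈ B, (H.verts.ncard - 1) * d :=
  block_diagonals_transverse_general G d hG B hB
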